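/- Let π : X → M be a smooth surjective map of diffeological spaces equipped with a path-lifting L, let x ∈ X and m = π(x). Then the assignment γ ↦ L_{(.)}(γ) (where L_{(.)}(γ) : y ↦ L_y(γ)(1)) descends to the quotient Hol_x^L = 𝓛(m;M)/∼, i.e. γ ∼ γ' implies L_{(.)}(γ) = L_{(.)}(γ'), and the induced map Hol_x^L → Bij(π⁻¹(m)) into the group of bijections of the fiber is an injective group morphism (for the group structure on Hol_x^L induced by ∨). -/

import Mathlib

open Set

/-- Euclidean space `ℝⁿ`. -/
abbrev Eucl (n : ℕ) : Type := EuclideanSpace ℝ (Fin n)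

/-- A system of parametrizations ("plots") on `X`: for each `n`, a predicate
`P O f` read as: the restriction of `f : ℝⁿ → X` to the domain `O ⊆ ℝⁿ` is a plot. -/
abbrev PlotsOn (X : Type*) : Type _ := ∀ ⦃n : ℕ⦄, Set (Eucl n) → (Eucl n → X) → Prop

/-- `P` is a diffeology on `X` (Souriau). -/
structure IsDiffeology {X : Type*} (P : PlotsOn X) : Prop where
  isOpen_dom : ∀ {n : ℕ} {O : Set (Eucl n)} {f : Eucl n → X}, P O f → IsOpen O
  congr : ∀ {n : ℕ} {O : Set (Eucl n)} {f g : Eucl n → X}, Set.EqOn f g O → P O f → P O g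
  const_mem : ∀ {n : ℕ} {O : Set (Eucl n)}, IsOpen O → ∀ x : X, P O fun _ => x
  locality : ∀ {n : ℕ} (S : Set (Set (Eucl n))) (f : Eucl n → X),
      (∀ O ∈ S, P O f) → P (⋃₀ S) f
  smooth_comp : ∀ {p q : ℕ} {O : Set (Eucl p)} {O' : Set (Eucl q)}
      {f : Eucl p → X} {g : Eucl q → Eucl p},
      P O f → IsOpen O' → ContDiffOn ℝ (⊤ : ℕ∞) g O' → Set.MapsTo g O' O → P O' (f ∘ g)

/-- Smooth maps between diffeological spaces. -/
def DSmooth {X X' : Type*} (P : PlotsOn X) (P' : PlotsOn X') (φ : X → X') : Prop :=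
  ∀ {n : ℕ} {O : Set (Eucl n)} {p : Eucl n → X}, P O p → P' O (φ ∘ p)

/-- Frölicher space structure on `X`. -/
structure IsFrolicher {X : Type*} (F : Set (X → ℝ)) (C : Set (ℝ → X)) : Prop where
  mem_F_iff : ∀ f : X → ℝ, f ∈ F ↔ ∀ c ∈ C, ContDiff ℝ (⊤ : ℕ∞) (f ∘ c)
  mem_C_iff : ∀ c : ℝ → X, c ∈ C ↔ ∀ f ∈ F, ContDiff ℝ (⊤ : ℕ∞) (f ∘ c)

/-- Smooth maps between Frölicher spaces. -/
def FSmooth {X X' : Type*} (F : Set (X → ℝ)) (C : Set (ℝ → X))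
    (F' : Set (X' → ℝ)) (_C' : Set (ℝ → X')) (φ : X → X') : Prop :=
  ∀ f' ∈ F', ∀ c ∈ C, ContDiff ℝ (⊤ : ℕ∞) (f' ∘ φ ∘ c)

/-- The natural diffeology `𝒫(ℱ)` of a Frölicher space. -/
def natPlots {X : Type*} (F : Set (X → ℝ)) : PlotsOn X :=
  fun _n O p => IsOpen O ∧ ∀ f ∈ F, ContDiffOn ℝ (⊤ : ℕ∞) (f ∘ p) O

/-- Contours generated by a family of functions `Fg`. -/
def genC {X : Type*} (Fg : Set (X → ℝ)) : Set (ℝ → X) :=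
  {c | ∀ f ∈ Fg, ContDiff ℝ (⊤ : ℕ∞) (f ∘ c)}

/-- Functions of the Frölicher structure generated by a family of functions `Fg`. -/
def genF {X : Type*} (Fg : Set (X → ℝ)) : Set (X → ℝ) :=
  {f | ∀ c ∈ genC Fg, ContDiff ℝ (⊤ : ℕ∞) (f ∘ c)}

section PathLifting

/-- Reversal `γ⁻¹` of a path: `γ⁻¹(t) = γ(1 − t)`. -/
def pathInv {M : Type*} (γ : ℝ → M) : ℝ → M := fun t => γ (1 - t)

/-- Concatenation `a ∨ b` of two paths (stationary at their endpoints):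
traverse `b` first, then `a`. -/
noncomputable def pathConcat {M : Type*} (a b : ℝ → M) : ℝ → M :=
  fun t => if t ≤ 1 / 2 then b (2 * t) else a (2 * t - 1)

/-- A path (parametrized by `ℝ`, regarded through its restriction to `[0,1]`) is
stationary at its endpoints if it is constant near `0` and near `1`. -/
def StationaryPath {M : Type*} (γ : ℝ → M) : Prop :=
  (∃ ε > (0:ℝ), ∀ t ≤ ε, γ t = γ 0) ∧ (∃ ε > (0:ℝ), ∀ t ≥ 1 - ε, γ t = γ 1)

/-- A smooth path on a diffeological space: a `1`-plot defined on all of `ℝ`. -/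
def IsSmoothPath {M : Type*} (PM : PlotsOn M) (γ : ℝ → M) : Prop :=
  PM (Set.univ : Set (Eucl 1)) (fun z => γ (z 0))

/-- A smooth loop based at `m`, stationary at its endpoints. -/
def IsLoopAt {M : Type*} (PM : PlotsOn M) (m : M) (γ : ℝ → M) : Prop :=
  IsSmoothPath PM γ ∧ StationaryPath γ ∧ γ 0 = m ∧ γ 1 = m

/-- A path-lifting on the smooth surjection `π : X → M`: a smooth assignment
`(γ, x) ↦ L γ x` of paths of `X` to pairs of a smooth path `γ` of `M` and a point
`x ∈ π⁻¹(γ 0)`, satisfying the axioms (i)–(vi) of Definition `pl` of the paper. -/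
structure IsPathLifting {X M : Type*} (PX : PlotsOn X) (PM : PlotsOn M) (π : X → M)
    (L : (ℝ → M) → X → ℝ → X) : Prop where
  /-- `L` is smooth: it maps smooth families of (paths, initial points) to smooth
  families of paths (smoothness is tested on finite-dimensional plots, by
  cartesian closedness). -/
  smooth : ∀ {n : ℕ} {O : Set (Eucl n)} (γ : Eucl n → ℝ → M) (ξ : Eucl n → X),
      PM {z : Eucl (n+1) | (WithLp.toLp 2 (fun i : Fin n => z i.castSucc)) ∈ O}
        (fun z => γ (WithLp.toLp 2 (fun i : Fin n => z i.castSucc)) (z (Fin.last n))) →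
      PX O ξ → (∀ z ∈ O, π (ξ z) = γ z 0) →
      PX {z : Eucl (n+1) | (WithLp.toLp 2 (fun i : Fin n => z i.castSucc)) ∈ O}
        (fun z => L (γ (WithLp.toLp 2 (fun i : Fin n => z i.castSucc))) (ξ (WithLp.toLp 2 (fun i : Fin n => z i.castSucc))) (z (Fin.last n)))
  /-- liftings are smooth paths -/
  lift_isPath : ∀ γ x, IsSmoothPath PM γ → π x = γ 0 → IsSmoothPath PX (L γ x)
  /-- (i) `π ∘ L_x(γ) = γ` -/
  lift_proj : ∀ γ x, IsSmoothPath PM γ → π x = γ 0 → ∀ t, π (L γ x t) = γ t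
  /-- (ii) `L_x(γ' ∨ γ'') = L_{L_x(γ'')(1)}(γ') ∨ L_x(γ'')` -/
  lift_concat : ∀ γ' γ'' x, IsSmoothPath PM γ' → IsSmoothPath PM γ'' →
      StationaryPath γ' → StationaryPath γ'' → γ'' 1 = γ' 0 → π x = γ'' 0 →
      L (pathConcat γ' γ'') x = pathConcat (L γ' (L γ'' x 1)) (L γ'' x)
  /-- (iii) `L_x(γ ∘ g) = L_x(γ) ∘ g` for `g : [0,1] → [0,1]` smooth monotone -/
  lift_reparam : ∀ γ x (g : ℝ → ℝ), IsSmoothPath PM γ → π x = γ 0 →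
      ContDiff ℝ (⊤ : ℕ∞) g → Monotone g → Set.MapsTo g (Set.Icc (0:ℝ) 1) (Set.Icc (0:ℝ) 1) →
      L (γ ∘ g) x = (L γ x) ∘ g
  /-- (iv) `L_x(γ⁻¹ ∨ γ)(1) = x` -/
  lift_inv_concat : ∀ γ x, IsSmoothPath PM γ → StationaryPath γ → π x = γ 0 →
      L (pathConcat (pathInv γ) γ) x 1 = x
  /-- (v) `L_x(γ)(0) = x` -/
  lift_start : ∀ γ x, IsSmoothPath PM γ → π x = γ 0 → L γ x 0 = x
  /-- (vi) if `L_x(γ)(1) = x` for some `x ∈ π⁻¹(γ 0)` then for every such `x` -/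
  loop_exists_iff : ∀ γ, IsSmoothPath PM γ → γ 1 = γ 0 →
      (∃ x, π x = γ 0 ∧ L γ x 1 = x) → ∀ x, π x = γ 0 → L γ x 1 = x

/-- The relation `γ ∼ γ'` on loops based at `m`: the liftings from some point of the
fiber `π⁻¹(m)` have the same endpoint. -/
def simRel {X M : Type*} (L : (ℝ → M) → X → ℝ → X) (π : X → M) (m : M)
    (γ γ' : ℝ → M) : Prop :=
  ∃ x, π x = m ∧ L γ x 1 = L γ' x 1

/-- Membership in `𝓛₀^L(m;M)`: a loop based at `m` whose lifting from some point
of the fiber is again a loop. -/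
def IsNullLoop {X M : Type*} (L : (ℝ → M) → X → ℝ → X) (π : X → M)
    (PM : PlotsOn M) (m : M) (γ : ℝ → M) : Prop :=
  IsLoopAt PM m γ ∧ ∃ x, π x = m ∧ L γ x 1 = x

end PathLifting

/-- The space of smooth loops of `M` based at `m`, stationary at endpoints. -/
def LoopSp {M : Type*} (PM : PlotsOn M) (m : M) : Type _ := {γ : ℝ → M // IsLoopAt PM m γ}

/-- The holonomy relation `∼` on the loop space. -/
def holRel {X M : Type*} (L : (ℝ → M) → X → ℝ → X) (π : X → M)
    (PM : PlotsOn M) (m : M) : LoopSp PM m → LoopSp PM m → Prop :=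
  fun a b => simRel L π m a.val b.val

/-- The holonomy group `Hol_x^L = 𝓛(m;M)/∼`. -/
def HolGrp {X M : Type*} (L : (ℝ → M) → X → ℝ → X) (π : X → M)
    (PM : PlotsOn M) (m : M) : Type _ := Quot (holRel L π PM m)

section Aux

variable {M : Type*} {PM : PlotsOn M}

lemma pathInv_pathInv (γ : ℝ → M) : pathInv (pathInv γ) = γ := by
  funext t; simp [pathInv]

lemma pathInv_zero (γ : ℝ → M) : pathInv γ 0 = γ 1 := by simp [pathInv]

lemma pathInv_one (γ : ℝ → M) : pathInv γ 1 = γ 0 := by simp [pathInv]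

lemma pathConcat_zero (a b : ℝ → M) : pathConcat a b 0 = b 0 := by
  norm_num [pathConcat]

lemma pathConcat_one (a b : ℝ → M) : pathConcat a b 1 = a 1 := by
  norm_num [pathConcat]

lemma stationary_pathInv {γ : ℝ → M} (h : StationaryPath γ) :
    StationaryPath (pathInv γ) := by
  obtain ⟨⟨ε0, hε0, h0⟩, ⟨ε1, hε1, h1⟩⟩ := h
  refine ⟨⟨ε1, hε1, fun t ht => ?_⟩, ⟨ε0, hε0, fun t ht => ?_⟩⟩
  · simp only [pathInv]
    norm_num
    rw [h1 (1 - t) (by linarith)]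
  · simp only [pathInv]
    norm_num
    rw [h0 (1 - t) (by linarith)]

lemma coord_contDiff : ContDiff ℝ (⊤ : ℕ∞) (fun z : Eucl 1 => z 0) := by
  have := contDiff_euclidean.mp (contDiff_id (𝕜 := ℝ) (E := Eucl 1) (n := (⊤ : ℕ∞))) 0
  exact this

lemma smoothPath_inv (hPM : IsDiffeology PM) {γ : ℝ → M}
    (h : IsSmoothPath PM γ) : IsSmoothPath PM (pathInv γ) := by
  set g : Eucl 1 → Eucl 1 := fun z => WithLp.toLp 2 (fun _ => 1 - z 0) with hgdef
  have hg : ContDiffOn ℝ (⊤ : ℕ∞) g (Set.univ : Set (Eucl 1)) := by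
    apply ContDiff.contDiffOn
    exact contDiff_euclidean.mpr fun i => contDiff_const.sub coord_contDiff
  have := hPM.smooth_comp h isOpen_univ hg (Set.mapsTo_univ _ _)
  exact this

lemma smoothPath_concat (hPM : IsDiffeology PM) {a b : ℝ → M}
    (ha : IsSmoothPath PM a) (hb : IsSmoothPath PM b)
    (sa : StationaryPath a) (sb : StationaryPath b) (hab : b 1 = a 0) :
    IsSmoothPath PM (pathConcat a b) := by
  obtain ⟨⟨εa, hεa, ha0⟩, _⟩ := sa
  obtain ⟨_, ⟨εb, hεb, hb1⟩⟩ := sb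
  set ε : ℝ := min εa εb with hε
  have hεpos : 0 < ε := lt_min hεa hεb
  set O₁ : Set (Eucl 1) := {z | z 0 < (1 + ε) / 2} with hO₁
  set O₂ : Set (Eucl 1) := {z | (1 - ε) / 2 < z 0} with hO₂
  have hO₁open : IsOpen O₁ := isOpen_Iio.preimage coord_contDiff.continuous
  have hO₂open : IsOpen O₂ := isOpen_Ioi.preimage coord_contDiff.continuous
  -- plot on O₁
  set g₁ : Eucl 1 → Eucl 1 := fun z => WithLp.toLp 2 (fun _ => 2 * z 0) with hg₁def
  set g₂ : Eucl 1 → Eucl 1 := fun z => WithLp.toLp 2 (fun _ => 2 * z 0 - 1) with hg₂def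
  have hg₁ : ContDiffOn ℝ (⊤ : ℕ∞) g₁ O₁ := by
    apply ContDiff.contDiffOn
    exact contDiff_euclidean.mpr fun i => contDiff_const.mul coord_contDiff
  have hg₂ : ContDiffOn ℝ (⊤ : ℕ∞) g₂ O₂ := by
    apply ContDiff.contDiffOn
    exact contDiff_euclidean.mpr fun i => (contDiff_const.mul coord_contDiff).sub contDiff_const
  have hP₁ : PM O₁ (fun z : Eucl 1 => pathConcat a b (z 0)) := by
    have h1 := hPM.smooth_comp hb hO₁open hg₁ (Set.mapsTo_univ _ _)
    refine hPM.congr (fun z hz => ?_) h1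
    show b (2 * z 0) = pathConcat a b (z 0)
    by_cases ht : z 0 ≤ 1 / 2
    · simp only [pathConcat]
      rw [if_pos ht]
    · push_neg at ht
      have hz' : z 0 < (1 + ε) / 2 := hz
      simp only [pathConcat, if_neg (not_le.mpr ht)]
      rw [hb1 (2 * z 0) (by have := min_le_right εa εb; linarith),
        ha0 (2 * z 0 - 1) (by have := min_le_left εa εb; linarith), hab]
  have hP₂ : PM O₂ (fun z : Eucl 1 => pathConcat a b (z 0)) := by
    have h2 := hPM.smooth_comp ha hO₂open hg₂ (Set.mapsTo_univ _ _)
    refine hPM.congr (fun z hz => ?_) h2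
    show a (2 * z 0 - 1) = pathConcat a b (z 0)
    by_cases ht : z 0 ≤ 1 / 2
    · have hz' : (1 - ε) / 2 < z 0 := hz
      simp only [pathConcat, if_pos ht]
      rw [hb1 (2 * z 0) (by have := min_le_right εa εb; linarith),
        ha0 (2 * z 0 - 1) (by have := min_le_left εa εb; linarith), hab]
    · simp only [pathConcat]
      rw [if_neg ht]
  have hloc := hPM.locality {O₁, O₂} (fun z : Eucl 1 => pathConcat a b (z 0))
    (by rintro O (rfl | rfl) <;> assumption)
  have hcov : ⋃₀ ({O₁, O₂} : Set (Set (Eucl 1))) = Set.univ := by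
    apply Set.eq_univ_of_forall
    intro z
    by_cases hz : z 0 < (1 + ε) / 2
    · exact ⟨O₁, Or.inl rfl, hz⟩
    · refine ⟨O₂, Or.inr rfl, ?_⟩
      push_neg at hz
      show (1 - ε) / 2 < z 0
      calc (1 - ε) / 2 < (1 + ε) / 2 := by linarith
        _ ≤ z 0 := hz
  rw [hcov] at hloc
  exact hloc

end Aux

/-- the endpoint maps `L_{(.)}(γ) : y ↦ L_y(γ)(1)` descend to the
quotient `Hol_x^L = 𝓛(m;M)/∼`, and the induced map `Hol_x^L → Bij(π⁻¹(m))` is an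
injective morphism of groups (each value is a bijection of the fiber, and
concatenation of loops is sent to composition). -/
theorem holonomy_embeds_into_fiber_bijections
    {X M : Type*} {PX : PlotsOn X} {PM : PlotsOn M}
    (hPX : IsDiffeology PX) (hPM : IsDiffeology PM)
    {π : X → M} (hsurj : Function.Surjective π) (hπ : DSmooth PX PM π)
    {L : (ℝ → M) → X → ℝ → X} (hL : IsPathLifting PX PM π L)
    (x : X) (m : M) (hx : π x = m) :
    ∃ Φ : HolGrp L π PM m → ({y : X // π y = m} → {y : X // π y = m}),
      -- Φ is induced by the endpoint maps (in particular these descend to the quotient)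
      (∀ (a : LoopSp PM m) (y : {y : X // π y = m}),
        (Φ (Quot.mk _ a) y).val = L a.val y.val 1) ∧
      -- Φ is valued in bijections of the fiber
      (∀ q, Function.Bijective (Φ q)) ∧
      -- Φ is injective
      Function.Injective Φ ∧
      -- Φ is a morphism: concatenation goes to composition
      (∀ a b c : LoopSp PM m, c.val = pathConcat a.val b.val →
        Φ (Quot.mk _ c) = Φ (Quot.mk _ a) ∘ Φ (Quot.mk _ b)) := by
  -- endpoint of lift of concatenation
  have keyConcat : ∀ (γ' γ'' : ℝ → M) (y : X), IsSmoothPath PM γ' → IsSmoothPath PM γ'' →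
      StationaryPath γ' → StationaryPath γ'' → γ'' 1 = γ' 0 → π y = γ'' 0 →
      L (pathConcat γ' γ'') y 1 = L γ' (L γ'' y 1) 1 := by
    intro γ' γ'' y h1 h2 s1 s2 hcomp hy
    have := congrFun (hL.lift_concat γ' γ'' y h1 h2 s1 s2 hcomp hy) 1
    rw [this, pathConcat_one]
  -- Fact A: L_{L_y(γ)(1)}(γ⁻¹)(1) = y
  have keyA : ∀ (γ : ℝ → M) (y : X), IsSmoothPath PM γ → StationaryPath γ → π y = γ 0 →
      L (pathInv γ) (L γ y 1) 1 = y := by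
    intro γ y hγ sγ hy
    have hinv := hL.lift_inv_concat γ y hγ sγ hy
    rw [keyConcat (pathInv γ) γ y (smoothPath_inv hPM hγ) hγ (stationary_pathInv sγ) sγ
      (pathInv_zero γ).symm hy] at hinv
    exact hinv
  -- Fact B: L_{L_z(γ⁻¹)(1)}(γ)(1) = z
  have keyB : ∀ (γ : ℝ → M) (z : X), IsSmoothPath PM γ → StationaryPath γ → π z = γ 1 →
      L γ (L (pathInv γ) z 1) 1 = z := by
    intro γ z hγ sγ hz
    have := keyA (pathInv γ) z (smoothPath_inv hPM hγ) (stationary_pathInv sγ)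
      (by rw [hz, pathInv_zero])
    rwa [pathInv_pathInv] at this
  -- fiber membership of endpoints
  have memEnd : ∀ (a : LoopSp PM m) (y : X), π y = m → π (L a.val y 1) = m := by
    intro a y hy
    obtain ⟨hsm, hst, h0, h1⟩ := a.prop
    rw [hL.lift_proj a.val y hsm (by rw [hy, h0]), h1]
  -- descent
  have descend : ∀ a b : LoopSp PM m, holRel L π PM m a b →
      ∀ y : X, π y = m → L a.val y 1 = L b.val y 1 := by
    intro a b ⟨x₀, hx₀, hsame⟩ y hy
    obtain ⟨hsa, hstA, ha0, ha1⟩ := a.prop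
    obtain ⟨hsb, hstB, hb0, hb1⟩ := b.prop
    set c : ℝ → M := pathConcat (pathInv a.val) b.val with hc
    have hsc : IsSmoothPath PM c := smoothPath_concat hPM (smoothPath_inv hPM hsa) hsb
      (stationary_pathInv hstA) hstB (by rw [hb1, pathInv_zero, ha1])
    have hc0 : c 0 = m := by rw [hc, pathConcat_zero, hb0]
    have hc1 : c 1 = c 0 := by
      rw [hc, pathConcat_one, pathConcat_zero, pathInv_one, ha0, hb0]
    have hend : ∀ z : X, π z = m →
        L c z 1 = L (pathInv a.val) (L b.val z 1) 1 := fun z hz =>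
      keyConcat (pathInv a.val) b.val z (smoothPath_inv hPM hsa) hsb
        (stationary_pathInv hstA) hstB (by rw [hb1, pathInv_zero, ha1]) (by rw [hz, hb0])
    -- c has a fixed point: x₀
    have hfix : L c x₀ 1 = x₀ := by
      rw [hend x₀ hx₀, ← hsame]
      exact keyA a.val x₀ hsa hstA (by rw [hx₀, ha0])
    have hall := hL.loop_exists_iff c hsc hc1 ⟨x₀, by rw [hc0]; exact ⟨hx₀, hfix⟩⟩
    have hyfix : L c y 1 = y := hall y (by rw [hc0, hy])
    rw [hend y hy] at hyfix
    -- apply the endpoint map of a to both sides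
    have := congrArg (fun z => L a.val z 1) hyfix
    beta_reduce at this
    rw [keyB a.val (L b.val y 1) hsa hstA
      (by rw [hL.lift_proj b.val y hsb (by rw [hy, hb0]), hb1, ha1])] at this
    exact this.symm
  -- the map on the loop space
  set f : LoopSp PM m → ({y : X // π y = m} → {y : X // π y = m}) :=
    fun a y => ⟨L a.val y.val 1, memEnd a y.val y.prop⟩ with hf
  have hdesc : ∀ a b : LoopSp PM m, holRel L π PM m a b → f a = f b := by
    intro a b hab
    funext y
    exact Subtype.ext (descend a b hab y.val y.prop)
  refine ⟨Quot.lift f hdesc, fun a y => rfl, ?_, ?_, ?_⟩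
  · -- bijectivity
    intro q
    induction q using Quot.ind with
    | _ a =>
      obtain ⟨hsa, hstA, ha0, ha1⟩ := a.prop
      have hmemInv : ∀ y : {y : X // π y = m}, π (L (pathInv a.val) y.val 1) = m := by
        intro y
        rw [hL.lift_proj (pathInv a.val) y.val (smoothPath_inv hPM hsa)
          (by rw [y.prop, pathInv_zero, ha1]), pathInv_one, ha0]
      refine Function.bijective_iff_has_inverse.mpr
        ⟨fun y => ⟨L (pathInv a.val) y.val 1, hmemInv y⟩, fun y => ?_, fun y => ?_⟩
      · exact Subtype.ext (keyA a.val y.val hsa hstA (by rw [y.prop, ha0]))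
      · exact Subtype.ext (keyB a.val y.val hsa hstA (by rw [y.prop, ha1]))
  · -- injectivity
    intro q q'
    induction q using Quot.ind with
    | _ a =>
      induction q' using Quot.ind with
      | _ b =>
        intro h
        apply Quot.sound
        have := congrArg Subtype.val (congrFun h ⟨x, hx⟩)
        exact ⟨x, hx, this⟩
  · -- morphism
    intro a b c hcval
    funext y
    apply Subtype.ext
    show L c.val y.val 1 = L a.val (L b.val y.val 1) 1
    obtain ⟨hsa, hstA, ha0, ha1⟩ := a.prop
    obtain ⟨hsb, hstB, hb0, hb1⟩ := b.prop
    rw [hcval]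
    exact keyConcat a.val b.val y.val hsa hsb hstA hstB (by rw [hb1, ha0])
      (by rw [y.prop, hb0])
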